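/- Fix integers k ≥ 2, n ≥ 1, 1 ≤ δ ≤ n, and 0 ≤ ε ≤ (k−1)n. For any pair of non-negative integers ε₁, ε₂ with ε₁ ≤ n and ε = (k−1)ε₁ + ε₂, one has |𝒫^{k,ε}_{n,δ}| = Σ_{i=1}^{δ} C(ε₁, δ−i) · |𝒫^{k,ε₂}_{n−ε₁, i}|. -/

import Mathlib

/-- A step of a lattice path: `E = (1,0)` or `N = (0,1)`. -/
inductive Step : Type
  | E | N
deriving DecidableEq, Repr

instance : Fintype Step :=
  ⟨{Step.E, Step.N}, fun x => by cases x <;> simp⟩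

/-- The terminal point of a lattice path starting at `(0,0)`. -/
def endpoint (γ : List Step) : ℤ × ℤ :=
  ((γ.count Step.E : ℤ), (γ.count Step.N : ℤ))

/-- The set of lattice points visited by a lattice path starting at `(0,0)`. -/
def vertices (γ : List Step) : Set (ℤ × ℤ) :=
  {p | ∃ i ≤ γ.length, endpoint (γ.take i) = p}

/-- The bottom-path condition: `γ = E N^{b₁} E N^{b₂} ⋯ E N^{b_m}` where every
`bᵢ ≡ k - 2 (mod k - 1)`. -/
def kGoodBottom (k : ℕ) (γ : List Step) : Prop :=
  ∃ bs : List ℕ, (∀ b ∈ bs, b % (k - 1) = (k - 2) % (k - 1)) ∧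
    γ = (bs.map fun b => Step.E :: List.replicate b Step.N).flatten

/-- `γ₁` stays weakly above `γ₂`: no visited point of `γ₂` lies strictly above a
visited point of `γ₁` with the same `x`-coordinate. -/
def weaklyAbove (γ₁ γ₂ : List Step) : Prop :=
  ∀ p ∈ vertices γ₁, ∀ q ∈ vertices γ₂, p.1 = q.1 → q.2 ≤ p.2

/-- The set `𝒫^{k,ε}_{n,δ}` of `k`-path pairs of length `((k-1)n - ε, (k-1)n)`
and distance `δ`. -/
def PathPairs (k n ε δ : ℕ) : Set (List Step × List Step) :=
  {p | p.1.length = (k - 1) * n - ε ∧ p.1.head? = some Step.N ∧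
       p.2.length = (k - 1) * n ∧ p.2.head? = some Step.E ∧
       (∀ q ∈ vertices p.1 ∩ vertices p.2, q = ((0 : ℤ), (0 : ℤ))) ∧
       (endpoint p.2).1 - (endpoint p.1).1 = (δ : ℤ) ∧
       kGoodBottom k p.2}

/-- The set `𝒫̃^{k,ε}_{n,δ,m}` of weak `k`-path pairs of distance `δ` with
exactly `m` returns (intersections away from the origin). -/
def WeakPathPairs (k n ε δ m : ℕ) : Set (List Step × List Step) :=
  {p | p.1.length = (k - 1) * n - ε ∧ p.1.head? = some Step.N ∧
       p.2.length = (k - 1) * n ∧ p.2.head? = some Step.E ∧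
       weaklyAbove p.1 p.2 ∧
       (endpoint p.2).1 - (endpoint p.1).1 = (δ : ℤ) ∧
       kGoodBottom k p.2 ∧
       ((vertices p.1 ∩ vertices p.2) \ {((0 : ℤ), (0 : ℤ))}).ncard = m}

/-- The generating function `C_k(t) = ∑_{n≥0} (1/(kn+1)) C(kn+1, n) tⁿ` of the
`k`-Catalan (Fuss–Catalan) numbers, as a formal power series over `ℚ`. -/
def fussCatalanGF (k : ℕ) : PowerSeries ℚ :=
  PowerSeries.mk fun n => (((k * n + 1 : ℕ) : ℚ))⁻¹ * ((k * n + 1).choose n : ℚ)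


/-!
Removing the last `k - 1` steps of the bottom path, which are `N^{k-1}` or `E N^{k-2}`, is a
bijection from `𝒫^{k,ε+(k-1)}_{m+1,δ+1}` onto `𝒫^{k,ε}_{m,δ+1} ⊔ 𝒫^{k,ε}_{m,δ}`: the top path
never obstructs, since it stays strictly left of the new steps. So the counts obey Pascal's
recurrence, and iterating it `ε₁` times produces the binomial convolution. The boundary terms vanish
because `𝒫_{n,0}` is empty: a top path leaving by `N` and ending at the same `x`-coordinate as the
(longer) bottom path leaving by `E` has to meet it.
-/

open Step

lemma count_E_add_count_N (γ : List Step) : γ.count E + γ.count N = γ.length := by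
  induction γ with
  | nil => rfl
  | cons s γ ih => cases s <;> simp <;> omega

lemma count_take_succ_le {α : Type*} [BEq α] (l : List α) (a : α) (i : ℕ) :
    (l.take (i + 1)).count a ≤ (l.take i).count a + 1 := by
  rw [List.take_add_one, List.count_append]
  cases l[i]? <;> simp [List.count_singleton]
  split <;> omega

lemma fst_le_of_mem_vertices {γ : List Step} {q : ℤ × ℤ} (hq : q ∈ vertices γ) :
    q.1 ≤ (endpoint γ).1 := by
  obtain ⟨i, -, rfl⟩ := hq
  simp only [endpoint]
  exact_mod_cast ((γ.take_prefix i).count_le E)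

lemma vertices_subset_append (γ t : List Step) : vertices γ ⊆ vertices (γ ++ t) := by
  rintro q ⟨i, hi, rfl⟩
  exact ⟨i, by simp; omega, by rw [List.take_append_of_le_length hi]⟩

lemma mem_vertices_append {γ t : List Step} {q : ℤ × ℤ} (hq : q ∈ vertices (γ ++ t)) :
    q ∈ vertices γ ∨ (endpoint γ).1 + (t.take 1).count E ≤ q.1 := by
  obtain ⟨i, hi, rfl⟩ := hq
  rcases le_or_gt i γ.length with hiγ | hiγ
  · exact .inl ⟨i, hiγ, by rw [List.take_append_of_le_length hiγ]⟩
  · right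
    have : (t.take 1).count E ≤ (t.take (i - γ.length)).count E :=
      (List.take_prefix_take_left (by omega)).count_le E
    simp only [endpoint, List.take_append, List.take_of_length_le hiγ.le, List.count_append]
    omega

lemma count_E_lt_of_vertices_inter {γ₁ γ₂ : List Step} (h₁ : γ₁.head? = some N)
    (h₂ : γ₂.head? = some E) (hlen : γ₁.length ≤ γ₂.length)
    (hmeet : ∀ q ∈ vertices γ₁ ∩ vertices γ₂, q = (0, 0)) :
    γ₁.count E < γ₂.count E := by
  -- `d t` compares the paths on the antidiagonal `x + y = t`, where they cannot meet for `t ≥ 1`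
  let d : ℕ → ℤ := fun t => ((γ₂.take t).count E : ℤ) - (γ₁.take t).count E
  obtain ⟨s₁, rfl⟩ : ∃ s, γ₁ = N :: s := List.head?_eq_some_iff.mp h₁
  obtain ⟨s₂, rfl⟩ : ∃ s, γ₂ = E :: s := List.head?_eq_some_iff.mp h₂
  have hpos : ∀ t, 1 ≤ t → t ≤ (N :: s₁).length → 1 ≤ d t := by
    intro t ht
    induction t, ht using Nat.le_induction with
    | base => intro; simp [d]
    | succ t ht ih =>
      intro hle
      have hd := ih (by omega)
      have hstep₁ := count_take_succ_le (N :: s₁) E t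
      have hstep₂ := ((E :: s₂).take_prefix_take_left (Nat.le_add_right t 1)).count_le E
      have hne : d (t + 1) ≠ 0 := by
        intro h0
        have hsum₁ := count_E_add_count_N ((N :: s₁).take (t + 1))
        have hsum₂ := count_E_add_count_N ((E :: s₂).take (t + 1))
        simp only [List.length_take] at hsum₁ hsum₂
        have hq := hmeet (endpoint ((N :: s₁).take (t + 1)))
          ⟨⟨t + 1, hle, rfl⟩, ⟨t + 1, hle.trans hlen, ?_⟩⟩
        · simp only [endpoint, Prod.mk.injEq] at hq
          omega
        · simp only [endpoint, Prod.mk.injEq, d] at h0 ⊢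
          omega
      simp only [d] at hd hne ⊢
      omega
  have hlast := hpos _ (by simp) le_rfl
  have hle := ((E :: s₂).take_prefix (N :: s₁).length).count_le E
  simp only [d, List.take_length] at hlast
  omega

section kGoodBottom

variable {k : ℕ} {γ : List Step}

lemma kGoodBottom_append_cons (h : kGoodBottom k γ) :
    kGoodBottom k (γ ++ E :: List.replicate (k - 2) N) := by
  obtain ⟨bs, hbs, rfl⟩ := h
  refine ⟨bs ++ [k - 2], ?_, by simp⟩
  simp only [List.mem_append, List.mem_singleton]
  rintro b (hb | rfl)
  exacts [hbs b hb, rfl]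

lemma kGoodBottom_append_replicate (hγ : γ ≠ []) (h : kGoodBottom k γ) :
    kGoodBottom k (γ ++ List.replicate (k - 1) N) := by
  obtain ⟨bs, hbs, rfl⟩ := h
  obtain ⟨bs, b, rfl⟩ := (List.eq_nil_or_concat bs).resolve_left (by rintro rfl; simp at hγ)
  refine ⟨bs ++ [b + (k - 1)], ?_, by simp⟩
  simp only [List.concat_eq_append, List.mem_append, List.mem_singleton] at hbs ⊢
  rintro b' (hb' | rfl)
  · exact hbs b' (.inl hb')
  · rw [Nat.add_mod_right]
    exact hbs b (.inr rfl)

lemma kGoodBottom.eq_append (hγ : γ ≠ []) (h : kGoodBottom k γ) :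
    (∃ γ', γ = γ' ++ List.replicate (k - 1) N ∧ kGoodBottom k γ') ∨
      ∃ γ', γ = γ' ++ E :: List.replicate (k - 2) N ∧ kGoodBottom k γ' := by
  obtain ⟨bs, hbs, rfl⟩ := h
  obtain ⟨bs, b, rfl⟩ := (List.eq_nil_or_concat bs).resolve_left (by rintro rfl; simp at hγ)
  simp only [List.concat_eq_append, List.mem_append, List.mem_singleton] at hbs
  have hb := hbs b (.inr rfl)
  rcases le_or_gt (k - 1) b with hkb | hbk
  · refine .inl ⟨_, ?_, bs ++ [b - (k - 1)], ?_, rfl⟩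
    · simp [Nat.sub_add_cancel hkb]
    · simp only [List.mem_append, List.mem_singleton]
      rintro b' (hb' | rfl)
      · exact hbs b' (.inl hb')
      · rwa [← Nat.add_mod_right, Nat.sub_add_cancel hkb]
  · have hbk' : b = k - 2 := by
      rw [Nat.mod_eq_of_lt hbk, Nat.mod_eq_of_lt (by omega)] at hb
      exact hb
    exact .inr ⟨_, by simp [hbk'], bs, fun b' hb' => hbs b' (.inl hb'), rfl⟩

end kGoodBottom

lemma pathPairs_finite (k n ε δ : ℕ) : (PathPairs k n ε δ).Finite :=
  ((List.finite_length_eq Step _).prod (List.finite_length_eq Step _)).subset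
    fun _ hp => ⟨hp.1, hp.2.2.1⟩

lemma pathPairs_zero_distance (k n ε : ℕ) : PathPairs k n ε 0 = ∅ := by
  refine Set.eq_empty_of_forall_notMem ?_
  rintro ⟨γ₁, γ₂⟩ ⟨h₁, hN, h₂, hE, hmeet, hdist, -⟩
  dsimp only [endpoint] at h₁ h₂ hdist
  have := count_E_lt_of_vertices_inter (γ₁ := γ₁) (γ₂ := γ₂) hN hE (by omega) hmeet
  omega

section PathPairs

variable {k m ε δ : ℕ} {γ₁ γ₂ t : List Step}

lemma append_mem_pathPairs (ht : t.length = k - 1) (h : (γ₁, γ₂) ∈ PathPairs k m ε δ)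
    (hgood : kGoodBottom k (γ₂ ++ t))
    (hsep : (endpoint γ₁).1 < (endpoint γ₂).1 + (t.take 1).count E) :
    (γ₁, γ₂ ++ t) ∈ PathPairs k (m + 1) (ε + (k - 1)) (δ + t.count E) := by
  obtain ⟨h₁, hN, h₂, hE, hmeet, hdist, -⟩ := h
  refine ⟨?_, hN, ?_, ?_, ?_, ?_, hgood⟩
  · rw [h₁, Nat.mul_succ, Nat.add_sub_add_right]
  · simp [h₂, ht, Nat.mul_succ]
  · simp [List.head?_append, hE]
  · rintro q ⟨hq₁, hq₂⟩
    rcases mem_vertices_append hq₂ with hq₂ | hq₂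
    · exact hmeet q ⟨hq₁, hq₂⟩
    · have := fst_le_of_mem_vertices (γ := γ₁) hq₁
      omega
  · simp only [endpoint, List.count_append] at hdist ⊢
    push_cast
    omega

lemma mem_pathPairs_of_append (ht : t.length = k - 1)
    (h : (γ₁, γ₂ ++ t) ∈ PathPairs k (m + 1) (ε + (k - 1)) (δ + t.count E))
    (hgood : kGoodBottom k γ₂) : (γ₁, γ₂) ∈ PathPairs k m ε δ := by
  obtain ⟨h₁, hN, h₂, hE, hmeet, hdist, -⟩ := h
  have h₁' : γ₁.length = (k - 1) * m - ε := by
    rw [h₁, Nat.mul_succ, Nat.add_sub_add_right]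
  have h₂' : γ₂.length = (k - 1) * m := by
    simp only [List.length_append, ht, Nat.mul_succ] at h₂
    omega
  have hγ₂ : γ₂ ≠ [] := by
    have : γ₁ ≠ [] := by rintro rfl; simp at hN
    rw [← List.length_pos_iff] at this ⊢
    omega
  refine ⟨h₁', hN, h₂', ?_, ?_, ?_, hgood⟩
  · rwa [List.head?_append_of_ne_nil _ hγ₂] at hE
  · exact fun q hq => hmeet q ⟨hq.1, vertices_subset_append _ _ hq.2⟩
  · simp only [endpoint, List.count_append] at hdist ⊢
    push_cast at hdist
    omega

lemma pathPairs_succ_eq_union (hk : 2 ≤ k) :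
    PathPairs k (m + 1) (ε + (k - 1)) (δ + 1) =
      Prod.map id (· ++ List.replicate (k - 1) N) '' PathPairs k m ε (δ + 1) ∪
        Prod.map id (· ++ E :: List.replicate (k - 2) N) '' PathPairs k m ε δ := by
  have hlenN : (List.replicate (k - 1) N).length = k - 1 := List.length_replicate
  have hlenE : (E :: List.replicate (k - 2) N).length = k - 1 := by simp; omega
  have hcountN : (List.replicate (k - 1) N).count E = 0 := by simp [List.count_replicate]
  have hcountE : (E :: List.replicate (k - 2) N).count E = 1 := by simp [List.count_replicate]
  ext ⟨γ₁, γ⟩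
  constructor
  · intro h
    obtain ⟨-, -, -, hE, -, -, hbot⟩ := id h
    have hγ : γ ≠ [] := by rintro rfl; simp at hE
    rcases hbot.eq_append hγ with ⟨γ', rfl, hgood⟩ | ⟨γ', rfl, hgood⟩
    · exact .inl ⟨(γ₁, γ'),
        mem_pathPairs_of_append (δ := δ + 1) hlenN (by rwa [hcountN]) hgood, rfl⟩
    · exact .inr ⟨(γ₁, γ'), mem_pathPairs_of_append hlenE (by rwa [hcountE]) hgood, rfl⟩
  · rintro (⟨⟨γ₁, γ₂⟩, h, hγ⟩ | ⟨⟨γ₁, γ₂⟩, h, hγ⟩) <;> obtain ⟨rfl, rfl⟩ := Prod.mk.inj hγ <;>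
      obtain ⟨-, -, -, hE, -, hdist, hgood⟩ := id h <;> dsimp only at hE hdist
    · have hγ₂ : γ₂ ≠ [] := by rintro rfl; simp at hE
      simpa [hcountN] using append_mem_pathPairs hlenN h (kGoodBottom_append_replicate hγ₂ hgood)
        (by simp [List.count_replicate]; omega)
    · simpa [hcountE] using append_mem_pathPairs hlenE h (kGoodBottom_append_cons hgood)
        (by simp; omega)

lemma ncard_pathPairs_succ (hk : 2 ≤ k) :
    (PathPairs k (m + 1) (ε + (k - 1)) (δ + 1)).ncard =
      (PathPairs k m ε (δ + 1)).ncard + (PathPairs k m ε δ).ncard := by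
  have hinj (t : List Step) :
      Function.Injective (Prod.map id (· ++ t) : List Step × List Step → List Step × List Step) :=
    Function.injective_id.prodMap (List.append_left_injective t)
  have hdisj : Disjoint (Prod.map id (· ++ List.replicate (k - 1) N) '' PathPairs k m ε (δ + 1))
      (Prod.map id (· ++ E :: List.replicate (k - 2) N) '' PathPairs k m ε δ) := by
    rw [Set.disjoint_left]
    rintro _ ⟨p, -, rfl⟩ ⟨q, -, hpq⟩
    have := (List.append_inj' (congrArg Prod.snd hpq) (by simp; omega)).2
    simp [show k - 1 = k - 2 + 1 by omega, List.replicate_succ] at this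
  rw [pathPairs_succ_eq_union hk, Set.ncard_union_eq hdisj ((pathPairs_finite ..).image _)
    ((pathPairs_finite ..).image _), Set.ncard_image_of_injective _ (hinj _),
    Set.ncard_image_of_injective _ (hinj _)]

end PathPairs

open Finset

lemma sum_Icc_choose_succ_smul {M : Type*} [AddCommMonoid M] (f : ℕ → M) (e d : ℕ) :
    ∑ i ∈ Icc 1 (d + 1), (e + 1).choose (d + 1 - i) • f i =
      ∑ i ∈ Icc 1 (d + 1), e.choose (d + 1 - i) • f i + ∑ i ∈ Icc 1 d, e.choose (d - i) • f i := by
  have hpascal : ∀ i ∈ Icc 1 d, (e + 1).choose (d + 1 - i) • f i =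
      e.choose (d - i) • f i + e.choose (d + 1 - i) • f i := by
    intro i hi
    rw [show d + 1 - i = d - i + 1 by grind, Nat.choose_succ_succ', add_smul]
  rw [sum_Icc_succ_top (by omega), sum_Icc_succ_top (by omega), sum_congr rfl hpascal,
    sum_add_distrib]
  simp only [Nat.sub_self, Nat.choose_zero_right]
  abel

lemma ncard_pathPairs_add_mul {k : ℕ} (hk : 2 ≤ k) (m e ε δ : ℕ) :
    (PathPairs k (m + e) ((k - 1) * e + ε) δ).ncard =
      ∑ i ∈ Icc 1 δ, e.choose (δ - i) * (PathPairs k m ε i).ncard := by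
  induction e generalizing δ with
  | zero =>
    rcases δ with _ | d
    · simp [pathPairs_zero_distance]
    · rw [sum_Icc_succ_top (by omega), sum_eq_zero fun i hi => by
        rw [Nat.choose_eq_zero_of_lt (by grind), zero_mul]]
      simp
  | succ e ih =>
    rcases δ with _ | d
    · simp [pathPairs_zero_distance]
    · rw [← add_assoc, show (k - 1) * (e + 1) + ε = (k - 1) * e + ε + (k - 1) by ring,
        ncard_pathPairs_succ hk, ih, ih]
      simpa only [nsmul_eq_mul, Nat.cast_id] using
        (sum_Icc_choose_succ_smul (fun i => (PathPairs k m ε i).ncard) e d).symm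

theorem kPathPair_decomposition_general (k n ε δ ε₁ ε₂ : ℕ) (hk : 2 ≤ k) (hε₁ : ε₁ ≤ n)
    (hdecomp : ε = (k - 1) * ε₁ + ε₂) :
    (PathPairs k n ε δ).ncard =
      ∑ i ∈ Finset.Icc 1 δ, ε₁.choose (δ - i) * (PathPairs k (n - ε₁) ε₂ i).ncard := by
  obtain ⟨m, rfl⟩ := Nat.exists_eq_add_of_le' hε₁
  rw [hdecomp, Nat.add_sub_cancel]
  exact ncard_pathPairs_add_mul hk m ε₁ ε₂ δ

/-- Proposition 2.4: the summation decomposition of `|𝒫^{k,ε}_{n,δ}|` for any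
decomposition `ε = (k-1)ε₁ + ε₂`. -/
theorem kPathPair_decomposition (k n ε δ ε₁ ε₂ : ℕ) (hk : 2 ≤ k) (hn : 1 ≤ n)
    (hδ : 1 ≤ δ) (hδn : δ ≤ n) (hε : ε ≤ (k - 1) * n) (hε₁ : ε₁ ≤ n)
    (hdecomp : ε = (k - 1) * ε₁ + ε₂) :
    (PathPairs k n ε δ).ncard =
      ∑ i ∈ Finset.Icc 1 δ, ε₁.choose (δ - i) * (PathPairs k (n - ε₁) ε₂ i).ncard :=
  kPathPair_decomposition_general k n ε δ ε₁ ε₂ hk hε₁ hdecomp
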